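/- For any nonnegative integer m and any complex numbers d_0, …, d_m, the polynomial p(t) = Σ_{k=0}^m d_k b^m_k(t) satisfies ∫₀¹ |p(t)|² dt ≤ (1/(m+1))·Σ_{k=0}^m |d_k|², i.e. ‖p‖ ≤ ‖(d_0,…,d_m)‖₂/√(m+1); equivalently, the largest singular value of the Bernstein-to-Legendre conversion matrix M_m^{-1} equals 1/√(m+1). -/

import Mathlib

/-!
On `[0, 1]` the Bernstein polynomials `b^m_k` are nonnegative and sum to `1`, so by convexity of
`‖·‖²` we have `|Σ d_k b^m_k(t)|² ≤ Σ |d_k|² b^m_k(t)` pointwise. Each `b^m_k` has integral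
`1 / (m + 1)` (a Beta integral), so integrating gives the bound. For `d ≡ 1` the polynomial is
identically `1` and both sides equal `1`.
-/

open MeasureTheory

/-- The Bernstein basis polynomial b^m_k(t) = C(m,k)(1−t)^{m−k} t^k on [0,1]. -/
noncomputable def bern (n k : ℕ) (t : ℝ) : ℝ :=
  (n.choose k : ℝ) * (1 - t) ^ (n - k) * t ^ k

open Finset Nat

@[fun_prop]
lemma continuous_bern (n k : ℕ) : Continuous (bern n k) := by
  unfold bern; fun_prop

lemma bern_nonneg (n k : ℕ) {t : ℝ} (ht : t ∈ Set.Icc (0 : ℝ) 1) : 0 ≤ bern n k t := by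
  obtain ⟨ht₀, ht₁⟩ := ht
  have : 0 ≤ 1 - t := sub_nonneg.2 ht₁
  unfold bern; positivity

lemma sum_bern (m : ℕ) (t : ℝ) : ∑ k ∈ range (m + 1), bern m k t = 1 := by
  simpa [bern, mul_comm, mul_left_comm] using (add_pow t (1 - t) m).symm

lemma integral_pow_mul_one_sub_pow (a b : ℕ) :
    ∫ x in (0 : ℝ)..1, (1 - x) ^ a * x ^ b = a ! * b ! / (a + b + 1)! := by
  have hbeta := Complex.betaIntegral_eq_Gamma_mul_div (b + 1) (a + 1)
    (by simp; positivity) (by simp; positivity)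
  rw [show (b + 1 : ℂ) + (a + 1) = ((a + b + 1 : ℕ) : ℂ) + 1 by push_cast; ring,
    Complex.Gamma_nat_eq_factorial, Complex.Gamma_nat_eq_factorial,
    Complex.Gamma_nat_eq_factorial, Complex.betaIntegral] at hbeta
  simp only [add_sub_cancel_right, Complex.cpow_natCast] at hbeta
  apply Complex.ofReal_injective
  rw [← intervalIntegral.integral_ofReal]
  push_cast
  simpa only [mul_comm] using hbeta

lemma integral_bern {m k : ℕ} (hk : k ≤ m) :
    ∫ t in (0 : ℝ)..1, bern m k t = 1 / ((m : ℝ) + 1) := by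
  have hfac : (m.choose k * k ! * (m - k)! : ℝ) = m ! := by
    exact_mod_cast Nat.choose_mul_factorial_mul_factorial hk
  simp_rw [bern, mul_assoc, intervalIntegral.integral_const_mul]
  rw [integral_pow_mul_one_sub_pow, Nat.sub_add_cancel hk, Nat.factorial_succ]
  push_cast
  field_simp
  linear_combination hfac

lemma norm_sum_smul_sq_le {E ι : Type*} [SeminormedAddCommGroup E] [NormedSpace ℝ E]
    {s : Finset ι} {w : ι → ℝ} (hw₀ : ∀ i ∈ s, 0 ≤ w i) (hw₁ : ∑ i ∈ s, w i = 1) (z : ι → E) :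
    ‖∑ i ∈ s, w i • z i‖ ^ 2 ≤ ∑ i ∈ s, w i * ‖z i‖ ^ 2 :=
  ((convexOn_norm convex_univ).pow (fun _ _ => norm_nonneg _) 2).map_sum_le hw₀ hw₁
    (fun _ _ => Set.mem_univ _)

lemma norm_sum_mul_bern_sq_le (m : ℕ) (d : ℕ → ℂ) {t : ℝ} (ht : t ∈ Set.Icc (0 : ℝ) 1) :
    ‖∑ k ∈ range (m + 1), d k * (bern m k t : ℂ)‖ ^ 2
      ≤ ∑ k ∈ range (m + 1), ‖d k‖ ^ 2 * bern m k t := by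
  simpa only [Complex.real_smul, mul_comm] using
    norm_sum_smul_sq_le (fun k _ => bern_nonneg m k ht) (sum_bern m t) d

lemma integral_sum_mul_bern (m : ℕ) (c : ℕ → ℝ) :
    ∫ t in (0 : ℝ)..1, ∑ k ∈ range (m + 1), c k * bern m k t
      = 1 / ((m : ℝ) + 1) * ∑ k ∈ range (m + 1), c k := by
  rw [intervalIntegral.integral_finsetSum
    (fun k _ => (by fun_prop : Continuous _).intervalIntegrable 0 1), mul_sum]
  refine sum_congr rfl fun k hk => ?_
  rw [intervalIntegral.integral_const_mul, integral_bern (Nat.lt_succ_iff.1 (mem_range.1 hk)),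
    mul_comm]

/-- For any complex coefficients d_0,…,d_m, the polynomial p(t) = Σ_{k=0}^m d_k b^m_k(t)
satisfies ∫₀¹ |p(t)|² dt ≤ (1/(m+1))·Σ_{k=0}^m |d_k|², i.e.
‖p‖ ≤ ‖(d_0,…,d_m)‖₂/√(m+1); moreover this bound is attained by some nonzero coefficient
vector, i.e. the largest singular value of the Bernstein-to-Legendre conversion matrix
M_m⁻¹ equals 1/√(m+1). -/
theorem stmt18 (m : ℕ) :
    (∀ d : ℕ → ℂ,
      (∫ t in (0:ℝ)..1,
          ‖∑ k ∈ Finset.range (m + 1), d k * (bern m k t : ℂ)‖ ^ 2)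
        ≤ (1 / ((m : ℝ) + 1)) * ∑ k ∈ Finset.range (m + 1), ‖d k‖ ^ 2) ∧
    (∃ d : ℕ → ℂ, (∃ k ∈ Finset.range (m + 1), d k ≠ 0) ∧
      (∫ t in (0:ℝ)..1,
          ‖∑ k ∈ Finset.range (m + 1), d k * (bern m k t : ℂ)‖ ^ 2)
        = (1 / ((m : ℝ) + 1)) * ∑ k ∈ Finset.range (m + 1), ‖d k‖ ^ 2) := by
  refine ⟨fun d => ?_, fun _ => 1, ⟨0, by simp, one_ne_zero⟩, ?_⟩
  · rw [← integral_sum_mul_bern]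
    exact intervalIntegral.integral_mono_on zero_le_one
      ((by fun_prop : Continuous _).intervalIntegrable 0 1)
      ((by fun_prop : Continuous _).intervalIntegrable 0 1)
      fun t ht => norm_sum_mul_bern_sq_le m d ht
  · have hsum : ∀ t : ℝ, ∑ k ∈ range (m + 1), (1 : ℂ) * (bern m k t : ℂ) = 1 := fun t => by
      simp only [one_mul]; exact_mod_cast sum_bern m t
    simp only [hsum, norm_one, one_pow, sum_const, card_range, nsmul_eq_mul, mul_one]
    field_simp
    simp
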